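/- arXiv:2509.19825 — 7 statements merged into one kernel-verified Lean document; each statement's English description precedes it below -/
import Mathlib

section
/- Let H be a 2n×2n complex Hermitian matrix with H² = 1 that anticommutes with Σ := fromBlocks(1ₙ, 0, 0, −1ₙ), i.e. Σ·H·Σ = −H. Then there exists an n×n unitary matrix q such that H = fromBlocks(0, q, q†, 0). -/
open Matrix

namespace Matrix

variable {l m n o R : Type*} [Fintype m] [Fintype n] [DecidableEq m] [DecidableEq n]

theorem fromBlocks_one_neg_one_mul_mul_fromBlocks_one_neg_one [Ring R]
    (A : Matrix m m R) (B : Matrix m n R) (C : Matrix n m R) (D : Matrix n n R) :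
    fromBlocks 1 0 0 (-1) * fromBlocks A B C D * fromBlocks 1 0 0 (-1) =
      fromBlocks A (-B) (-C) D := by
  simp [fromBlocks_multiply]

theorem eq_fromBlocks_zero_zero_of_fromBlocks_one_neg_one_conj_eq_neg [Ring R]
    [IsAddTorsionFree R] (M : Matrix (m ⊕ n) (m ⊕ n) R)
    (h : fromBlocks 1 0 0 (-1) * M * fromBlocks 1 0 0 (-1) = -M) :
    M = fromBlocks 0 M.toBlocks₁₂ M.toBlocks₂₁ 0 := by
  rw [← fromBlocks_toBlocks M, fromBlocks_one_neg_one_mul_mul_fromBlocks_one_neg_one,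
    fromBlocks_neg, fromBlocks_inj] at h
  obtain ⟨h₁₁, -, -, h₂₂⟩ := h
  have hA : M.toBlocks₁₁ = 0 := by ext i j; exact self_eq_neg.mp (congrFun₂ h₁₁ i j)
  have hD : M.toBlocks₂₂ = 0 := by ext i j; exact self_eq_neg.mp (congrFun₂ h₂₂ i j)
  conv_lhs => rw [← fromBlocks_toBlocks M, hA, hD]

theorem eq_conjTranspose_of_fromBlocks_zero_zero_conjTranspose [AddMonoid R] [StarAddMonoid R]
    {B : Matrix l o R} {C : Matrix o l R}
    (h : (fromBlocks 0 B C 0)ᴴ = fromBlocks 0 B C 0) : C = Bᴴ := by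
  rw [fromBlocks_conjTranspose, fromBlocks_inj] at h
  exact h.2.2.1.symm

theorem fromBlocks_zero_zero_mul_self_eq_one_iff [Semiring R] (q : Matrix m n R)
    (p : Matrix n m R) :
    fromBlocks 0 q p 0 * fromBlocks 0 q p 0 = 1 ↔ q * p = 1 ∧ p * q = 1 := by
  rw [fromBlocks_multiply, ← fromBlocks_one, fromBlocks_inj]
  simp

end Matrix

/-- A flattened Hamiltonian (`Hᴴ = H`, `H² = 1`) anticommuting with
`Σ = fromBlocks 1 0 0 (−1)` is off-diagonal with a unitary upper-right block:
`H = fromBlocks 0 q qᴴ 0` for some unitary `q`. -/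
theorem offdiag_block_form_of_chiral {n : ℕ}
    (H : Matrix (Fin n ⊕ Fin n) (Fin n ⊕ Fin n) ℂ)
    (hH : Hᴴ = H)
    (hflat : H * H = 1)
    (hchi : (fromBlocks (1 : Matrix (Fin n) (Fin n) ℂ) 0 0 (-1)) * H *
        (fromBlocks (1 : Matrix (Fin n) (Fin n) ℂ) 0 0 (-1)) = -H) :
    ∃ q : Matrix (Fin n) (Fin n) ℂ,
      q * qᴴ = 1 ∧ qᴴ * q = 1 ∧ H = fromBlocks 0 q qᴴ 0 := by
  have hoff := eq_fromBlocks_zero_zero_of_fromBlocks_one_neg_one_conj_eq_neg H hchi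
  have hC : H.toBlocks₂₁ = H.toBlocks₁₂ᴴ :=
    eq_conjTranspose_of_fromBlocks_zero_zero_conjTranspose (hoff ▸ hH)
  rw [hC] at hoff
  obtain ⟨hqq, hqq'⟩ := (fromBlocks_zero_zero_mul_self_eq_one_iff _ _).mp (hoff ▸ hflat)
  exact ⟨H.toBlocks₁₂, hqq, hqq', hoff⟩
end

section
/- Let q be an n×n unitary matrix, let H = fromBlocks(0, q, q†, 0), and let T = fromBlocks(0, 1ₙ, 1ₙ, 0) and C = fromBlocks(0, −i·1ₙ, i·1ₙ, 0). Then the PT symmetry condition T·conj(H)·T† = H holds if and only if q is symmetric, i.e. qᵀ = q; and moreover, if qᵀ = q then the PC symmetry condition C·conj(H)·C† = −H also holds. -/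
open Matrix

/-- Entrywise complex conjugation of a matrix. -/
def mconj {m n : Type*} (M : Matrix m n ℂ) : Matrix m n ℂ :=
  M.map (starRingEnd ℂ)

/-
Conjugation by `T` exchanges the off-diagonal blocks of `conj H`, giving `fromBlocks 0 qᵀ (conj q) 0`;
since `conj q = (qᵀ)ᴴ`, comparing with `H` forces exactly `qᵀ = q`. Conjugation by `C`
moreover negates both blocks, giving `-H` once `qᵀ = q`.
-/

section Conjugation

variable {l m n o : Type*}

theorem mconj_eq_transpose_conjTranspose (M : Matrix m n ℂ) : mconj M = Mᵀᴴ := rfl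

theorem mconj_zero : mconj (0 : Matrix m n ℂ) = 0 := by
  simp [mconj_eq_transpose_conjTranspose]

theorem mconj_conjTranspose (M : Matrix m n ℂ) : mconj Mᴴ = Mᵀ := by
  rw [mconj_eq_transpose_conjTranspose, conjTranspose_transpose_eq_transpose_conjTranspose,
    conjTranspose_conjTranspose]

theorem mconj_fromBlocks (A : Matrix n l ℂ) (B : Matrix n m ℂ) (C : Matrix o l ℂ)
    (D : Matrix o m ℂ) :
    mconj (fromBlocks A B C D) = fromBlocks (mconj A) (mconj B) (mconj C) (mconj D) :=
  fromBlocks_map A B C D _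

theorem mconj_eq_conjTranspose_iff {M : Matrix n n ℂ} : mconj M = Mᴴ ↔ Mᵀ = M := by
  rw [mconj_eq_transpose_conjTranspose, conjTranspose_inj]

end Conjugation

section BlockSymmetries

variable {n : Type*} [Fintype n] [DecidableEq n]

theorem swap_mul_fromBlocks_mul_conjTranspose (A B C D : Matrix n n ℂ) :
    fromBlocks 0 1 1 0 * fromBlocks A B C D * (fromBlocks 0 1 1 0 : Matrix (n ⊕ n) (n ⊕ n) ℂ)ᴴ =
      fromBlocks D C B A := by
  simp [fromBlocks_conjTranspose, fromBlocks_multiply]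

theorem pauliY_mul_fromBlocks_mul_conjTranspose (A B C D : Matrix n n ℂ) :
    fromBlocks 0 (-(Complex.I • 1)) (Complex.I • 1) 0 * fromBlocks A B C D *
        (fromBlocks 0 (-(Complex.I • 1)) (Complex.I • 1) 0 : Matrix (n ⊕ n) (n ⊕ n) ℂ)ᴴ =
      fromBlocks D (-C) (-B) A := by
  simp [fromBlocks_conjTranspose, fromBlocks_multiply, smul_smul]

end BlockSymmetries

theorem CI_symmetry_iff_symmetric_q_general {n : ℕ}
    (q : Matrix (Fin n) (Fin n) ℂ)
    (H T C : Matrix (Fin n ⊕ Fin n) (Fin n ⊕ Fin n) ℂ)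
    (hHdef : H = fromBlocks 0 q qᴴ 0)
    (hTdef : T = fromBlocks 0 (1 : Matrix (Fin n) (Fin n) ℂ) 1 0)
    (hCdef : C = fromBlocks 0 (-(Complex.I • (1 : Matrix (Fin n) (Fin n) ℂ)))
        (Complex.I • (1 : Matrix (Fin n) (Fin n) ℂ)) 0) :
    (T * mconj H * Tᴴ = H ↔ qᵀ = q) ∧
      (qᵀ = q → C * mconj H * Cᴴ = -H) := by
  subst hHdef hTdef hCdef
  simp only [mconj_fromBlocks, mconj_zero, mconj_conjTranspose,
    swap_mul_fromBlocks_mul_conjTranspose, pauliY_mul_fromBlocks_mul_conjTranspose,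
    fromBlocks_inj, mconj_eq_conjTranspose_iff]
  refine ⟨by tauto, fun hsymm => ?_⟩
  rw [fromBlocks_neg, hsymm, mconj_eq_conjTranspose_iff.mpr hsymm, neg_zero]

/-- For `H = fromBlocks 0 q qᴴ 0` with `q` unitary, and the class-CI symmetry operators
`T = σ_x ⊗ 1` and `C = σ_y ⊗ 1`, PT symmetry `T·conj(H)·T† = H` holds iff `qᵀ = q`;
and if `qᵀ = q` then also the PC symmetry `C·conj(H)·C† = −H` holds. -/
theorem CI_symmetry_iff_symmetric_q {n : ℕ}
    (q : Matrix (Fin n) (Fin n) ℂ)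
    (hq : q * qᴴ = 1) (hq' : qᴴ * q = 1)
    (H T C : Matrix (Fin n ⊕ Fin n) (Fin n ⊕ Fin n) ℂ)
    (hHdef : H = fromBlocks 0 q qᴴ 0)
    (hTdef : T = fromBlocks 0 (1 : Matrix (Fin n) (Fin n) ℂ) 1 0)
    (hCdef : C = fromBlocks 0 (-(Complex.I • (1 : Matrix (Fin n) (Fin n) ℂ)))
        (Complex.I • (1 : Matrix (Fin n) (Fin n) ℂ)) 0) :
    (T * mconj H * Tᴴ = H ↔ qᵀ = q) ∧
      (qᵀ = q → C * mconj H * Cᴴ = -H) :=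
  CI_symmetry_iff_symmetric_q_general q H T C hHdef hTdef hCdef
end

section
/- Every symmetric unitary complex matrix admits a Takagi factorization: if q is an n×n complex matrix with q·q† = 1ₙ and qᵀ = q, then there exists an n×n unitary matrix Q such that q = Q·Qᵀ. -/
open Matrix

section Aux

variable {n : ℕ}

/-- If an orthonormal basis consists of eigenvectors of a real matrix `M`, then conjugating by
the change-of-basis matrix diagonalizes `M`. -/
lemma conj_toMatrix_eq_diagonal (M : Matrix (Fin n) (Fin n) ℝ)
    (b : OrthonormalBasis (Fin n) ℝ (EuclideanSpace ℝ (Fin n))) (μ : Fin n → ℝ)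
    (h : ∀ j, M *ᵥ ⇑(b j) = μ j • ⇑(b j)) :
    star ((EuclideanSpace.basisFun (Fin n) ℝ).toBasis.toMatrix b.toBasis) * M *
      ((EuclideanSpace.basisFun (Fin n) ℝ).toBasis.toMatrix b.toBasis) = diagonal μ := by
  set U : Matrix (Fin n) (Fin n) ℝ :=
    (EuclideanSpace.basisFun (Fin n) ℝ).toBasis.toMatrix b.toBasis with hU
  have hUapp : ∀ i j, U i j = b j i := fun i j => rfl
  have hUmem : U ∈ Matrix.unitaryGroup (Fin n) ℝ :=
    (EuclideanSpace.basisFun (Fin n) ℝ).toMatrix_orthonormalBasis_mem_unitary b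
  have hUmul : ∀ j, U *ᵥ Pi.single j 1 = ⇑(b j) := by
    intro j
    ext i
    simp [mulVec_single, hUapp]
  have hstar : ∀ j, (star U) *ᵥ ⇑(b j) = Pi.single j 1 := by
    intro j
    rw [← hUmul, mulVec_mulVec, Unitary.coe_star_mul_self ⟨U, hUmem⟩, one_mulVec]
  apply Matrix.toEuclideanLin.injective
  apply Module.Basis.ext (EuclideanSpace.basisFun (Fin n) ℝ).toBasis
  intro i
  simp only [toEuclideanLin_apply, OrthonormalBasis.coe_toBasis, EuclideanSpace.basisFun_apply,
    PiLp.ofLp_single, ← mulVec_mulVec, hUmul, h, Matrix.diagonal_mulVec_single, mulVec_smul,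
    hstar, WithLp.toLp_smul, PiLp.toLp_single, mul_one]
  apply PiLp.ext
  intro j
  simp only [PiLp.smul_apply, EuclideanSpace.single_apply, smul_eq_mul, mul_ite, mul_one, mul_zero]

end Aux
open Module.End in
lemma simultaneous_diagonalization {n : ℕ} (A B : Matrix (Fin n) (Fin n) ℝ)
    (hA : A.IsHermitian) (hB : B.IsHermitian) (hAB : A * B = B * A) :
    ∃ (O : Matrix (Fin n) (Fin n) ℝ) (α β : Fin n → ℝ),
      O ∈ Matrix.unitaryGroup (Fin n) ℝ ∧
      star O * A * O = diagonal α ∧ star O * B * O = diagonal β := by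
  classical
  have hTA : (Matrix.toEuclideanLin A).IsSymmetric := isHermitian_iff_isSymmetric.1 hA
  have hTB : (Matrix.toEuclideanLin B).IsSymmetric := isHermitian_iff_isSymmetric.1 hB
  have hcomm : Commute (Matrix.toEuclideanLin A) (Matrix.toEuclideanLin B) := by
    have h : ∀ (M N : Matrix (Fin n) (Fin n) ℝ),
        Matrix.toEuclideanLin (M * N) = Matrix.toEuclideanLin M ∘ₗ Matrix.toEuclideanLin N := by
      intro M N
      rw [Matrix.toEuclideanLin_eq_toLin_orthonormal]
      exact Matrix.toLin_mul _ _ _ M N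
    unfold Commute SemiconjBy
    rw [Module.End.mul_eq_comp, Module.End.mul_eq_comp, ← h, ← h, hAB]
  set TA := Matrix.toEuclideanLin A
  set TB := Matrix.toEuclideanLin B
  set E : ℝ × ℝ → Submodule ℝ (EuclideanSpace ℝ (Fin n)) :=
    fun p => eigenspace TA p.2 ⊓ eigenspace TB p.1 with hE
  have internal0 : DirectSum.IsInternal E :=
    LinearMap.IsSymmetric.directSum_isInternal_of_commute hTA hTB hcomm
  have internal : DirectSum.IsInternal (fun p : {p : ℝ × ℝ // E p ≠ ⊥} => E p) :=
    DirectSum.isInternal_ne_bot_iff.mpr internal0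
  have orth0 := LinearMap.IsSymmetric.orthogonalFamily_eigenspace_inf_eigenspace hTA hTB
  have orth : OrthogonalFamily ℝ (fun p : {p : ℝ × ℝ // E p ≠ ⊥} => E p)
      (fun p => (E p).subtypeₗᵢ) := orth0.comp Subtype.val_injective
  have hfin : Set.Finite {p : ℝ × ℝ | E p ≠ ⊥} := by
    apply Set.Finite.subset (Set.Finite.prod (Module.End.finite_hasEigenvalue TB)
      (Module.End.finite_hasEigenvalue TA))
    rintro ⟨μ, ν⟩ hp
    obtain ⟨v, hv, hv0⟩ := Submodule.exists_mem_ne_zero_of_ne_bot hp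
    exact ⟨hasEigenvalue_of_hasEigenvector ⟨hv.2, hv0⟩,
      hasEigenvalue_of_hasEigenvector ⟨hv.1, hv0⟩⟩
  haveI : Fintype {p : ℝ × ℝ // E p ≠ ⊥} := hfin.fintype
  have hn : Module.finrank ℝ (EuclideanSpace ℝ (Fin n)) = n := finrank_euclideanSpace_fin
  let b := internal.subordinateOrthonormalBasis hn orth
  let idx : Fin n → {p : ℝ × ℝ // E p ≠ ⊥} :=
    fun j => internal.subordinateOrthonormalBasisIndex hn j orth
  have hmem : ∀ j, b j ∈ E (idx j) :=
    fun j => internal.subordinateOrthonormalBasis_subordinate hn j orth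
  have hmulA : ∀ j, A *ᵥ ⇑(b j) = ((idx j : ℝ × ℝ).2) • ⇑(b j) := by
    intro j
    have := mem_eigenspace_iff.1 (hmem j).1
    exact congr(WithLp.ofLp $this)
  have hmulB : ∀ j, B *ᵥ ⇑(b j) = ((idx j : ℝ × ℝ).1) • ⇑(b j) := by
    intro j
    have := mem_eigenspace_iff.1 (hmem j).2
    exact congr(WithLp.ofLp $this)
  exact ⟨(EuclideanSpace.basisFun (Fin n) ℝ).toBasis.toMatrix b.toBasis,
    fun j => (idx j : ℝ × ℝ).2, fun j => (idx j : ℝ × ℝ).1,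
    (EuclideanSpace.basisFun (Fin n) ℝ).toMatrix_orthonormalBasis_mem_unitary b,
    conj_toMatrix_eq_diagonal A b _ hmulA, conj_toMatrix_eq_diagonal B b _ hmulB⟩
/-- Takagi factorization of a symmetric unitary matrix: every `q` with `q·q† = 1` and
`qᵀ = q` can be written as `q = Q·Qᵀ` with `Q` unitary. -/
theorem takagi_factorization_of_symmetric_unitary {n : ℕ}
    (q : Matrix (Fin n) (Fin n) ℂ)
    (hq : q * qᴴ = 1)
    (hsym : qᵀ = q) :
    ∃ Q : Matrix (Fin n) (Fin n) ℂ,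
      Q * Qᴴ = 1 ∧ Qᴴ * Q = 1 ∧ q = Q * Qᵀ := by
  classical
  have hsym' : ∀ i j, q j i = q i j := fun i j => congrFun (congrFun hsym i) j
  -- real and imaginary parts of `q`
  set A : Matrix (Fin n) (Fin n) ℝ := Matrix.of fun i j => (q i j).re with hAdef
  set B : Matrix (Fin n) (Fin n) ℝ := Matrix.of fun i j => (q i j).im with hBdef
  have hAs : ∀ i j, A j i = A i j := fun i j => congrArg Complex.re (hsym' i j)
  have hBs : ∀ i j, B j i = B i j := fun i j => congrArg Complex.im (hsym' i j)
  have hAherm : A.IsHermitian := by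
    ext i j
    simp only [Matrix.conjTranspose_apply, star_trivial]
    exact hAs i j
  have hBherm : B.IsHermitian := by
    ext i j
    simp only [Matrix.conjTranspose_apply, star_trivial]
    exact hBs i j
  -- commutation of the real and imaginary parts
  have hcomm : A * B = B * A := by
    ext i j
    have h : (∑ k, q i k * (starRingEnd ℂ) (q j k)) = (1 : Matrix (Fin n) (Fin n) ℂ) i j := by
      rw [← hq]
      simp [Matrix.mul_apply, Matrix.conjTranspose_apply]
    have him := congrArg Complex.im h
    rw [Complex.im_sum] at him
    simp only [Complex.mul_im, Complex.conj_re, Complex.conj_im, mul_neg,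
      Matrix.one_apply, apply_ite, Complex.one_im, Complex.zero_im, ite_self] at him
    -- him : ∑ k, ((q i k).re * -(q j k).im + (q i k).im * (q j k).re) = 0
    have h0 : ∑ k, (B i k * A k j - A i k * B k j) = 0 := by
      rw [← him]
      apply Finset.sum_congr rfl
      intro k _
      simp only [hAdef, hBdef, Matrix.of_apply]
      rw [hsym' j k]
      ring
    rw [Finset.sum_sub_distrib] at h0
    rw [Matrix.mul_apply, Matrix.mul_apply]
    have := sub_eq_zero.mp h0
    linarith [this]
  -- simultaneously diagonalize
  obtain ⟨O, α, β, hO, hDA, hDB⟩ := simultaneous_diagonalization A B hAherm hBherm hcomm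
  have hO1 : O * star O = 1 := (Matrix.mem_unitaryGroup_iff).mp hO
  have hO2 : star O * O = 1 := (Matrix.mem_unitaryGroup_iff').mp hO
  have hArec : A = O * diagonal α * star O := by
    rw [← hDA]
    rw [show O * (star O * A * O) * star O = (O * star O) * A * (O * star O) by
      simp only [Matrix.mul_assoc], hO1, Matrix.one_mul, Matrix.mul_one]
  have hBrec : B = O * diagonal β * star O := by
    rw [← hDB]
    rw [show O * (star O * B * O) * star O = (O * star O) * B * (O * star O) by
      simp only [Matrix.mul_assoc], hO1, Matrix.one_mul, Matrix.mul_one]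
  -- move to ℂ
  let f : ℝ →+* ℂ := Complex.ofRealHom
  set U : Matrix (Fin n) (Fin n) ℂ := O.map f with hUdef
  have hUH : Uᴴ = (star O).map f := by
    ext i j
    simp [hUdef, Matrix.conjTranspose_apply, Matrix.map_apply, f, Complex.conj_ofReal]
  have hUT : Uᵀ = Uᴴ := by
    rw [hUH]
    ext i j
    simp [hUdef, Matrix.transpose_apply, Matrix.map_apply, Matrix.conjTranspose_apply]
  have hU1 : U * Uᴴ = 1 := by
    rw [hUH, hUdef, ← Matrix.map_mul, hO1, Matrix.map_one f f.map_zero f.map_one]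
  have hU2 : Uᴴ * U = 1 := by
    rw [hUH, hUdef, ← Matrix.map_mul, hO2, Matrix.map_one f f.map_zero f.map_one]
  -- the diagonal part
  set d : Fin n → ℂ := fun j => (α j : ℂ) + Complex.I * (β j : ℂ) with hddef
  have hqUDU : q = U * diagonal d * Uᴴ := by
    have hAc : A.map f = U * diagonal (fun j => (α j : ℂ)) * Uᴴ := by
      rw [hArec, Matrix.map_mul, Matrix.map_mul, hUH, hUdef,
        Matrix.diagonal_map f.map_zero]
      rfl
    have hBc : B.map f = U * diagonal (fun j => (β j : ℂ)) * Uᴴ := by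
      rw [hBrec, Matrix.map_mul, Matrix.map_mul, hUH, hUdef,
        Matrix.diagonal_map f.map_zero]
      rfl
    have hdec : q = A.map f + Complex.I • B.map f := by
      ext i j
      simp only [Matrix.add_apply, Matrix.smul_apply, Matrix.map_apply, smul_eq_mul,
        hAdef, hBdef, Matrix.of_apply]
      simp only [f, Complex.ofRealHom_eq_coe]
      rw [mul_comm, Complex.re_add_im]
    rw [hdec, hAc, hBc, ← smul_mul_assoc, ← mul_smul_comm, ← Matrix.add_mul, ← Matrix.mul_add,
      ← Matrix.diagonal_smul, Matrix.diagonal_add]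
    congr 2
  -- the diagonal entries are unimodular
  have hDunit : ∀ j, d j * (starRingEnd ℂ) (d j) = 1 := by
    intro j
    have hD : diagonal d * (diagonal d)ᴴ = 1 := by
      have h1 : diagonal d = Uᴴ * q * U := by
        rw [hqUDU]
        rw [show Uᴴ * (U * diagonal d * Uᴴ) * U = (Uᴴ * U) * diagonal d * (Uᴴ * U) by
          simp only [Matrix.mul_assoc], hU2, Matrix.one_mul, Matrix.mul_one]
      rw [h1]
      simp only [Matrix.conjTranspose_mul, Matrix.conjTranspose_conjTranspose]
      rw [show Uᴴ * q * U * (Uᴴ * (qᴴ * U)) = Uᴴ * (q * (U * Uᴴ) * qᴴ) * U by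
        simp only [Matrix.mul_assoc], hU1, Matrix.mul_one, hq, Matrix.mul_one, hU2]
    have := congrFun (congrFun hD j) j
    simpa [Matrix.diagonal_conjTranspose, Matrix.diagonal_mul_diagonal,
      Matrix.diagonal_apply_eq, Matrix.one_apply_eq, Pi.star_apply, RCLike.star_def] using this
  have hd0 : ∀ j, d j ≠ 0 := by
    intro j h
    have := hDunit j
    rw [h] at this
    simp at this
  have habs : ∀ j, ‖d j‖ = 1 := by
    intro j
    have h := hDunit j
    rw [Complex.mul_conj] at h
    have : Complex.normSq (d j) = 1 := by exact_mod_cast h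
    rw [Complex.norm_def, this, Real.sqrt_one]
  -- square roots of the diagonal entries
  set e : Fin n → ℂ := fun j => (d j) ^ ((1 : ℂ)/2) with hedef
  have he2 : ∀ j, e j * e j = d j := by
    intro j
    rw [hedef]
    rw [← Complex.cpow_add _ _ (hd0 j)]
    norm_num
  have heabs : ∀ j, ‖e j‖ = 1 := by
    intro j
    rw [hedef]
    simp only []
    rw [Complex.norm_cpow_of_ne_zero (hd0 j)]
    simp [habs j]
  have heconj : ∀ j, e j * (starRingEnd ℂ) (e j) = 1 := by
    intro j
    rw [Complex.mul_conj]
    rw [← Complex.sq_norm, heabs j]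
    norm_num
  -- the factor
  refine ⟨U * diagonal e, ?_, ?_, ?_⟩
  · rw [Matrix.conjTranspose_mul, Matrix.diagonal_conjTranspose]
    calc U * diagonal e * (diagonal (star e) * Uᴴ)
        = U * (diagonal e * diagonal (star e)) * Uᴴ := by simp only [Matrix.mul_assoc]
    _ = 1 := by
        rw [Matrix.diagonal_mul_diagonal]
        have hfun : (fun j => e j * star e j) = fun _ => (1 : ℂ) := by
          funext j
          exact heconj j
        rw [hfun, Matrix.diagonal_one, Matrix.mul_one, hU1]
  · rw [Matrix.conjTranspose_mul, Matrix.diagonal_conjTranspose]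
    calc diagonal (star e) * Uᴴ * (U * diagonal e)
        = diagonal (star e) * (Uᴴ * U) * diagonal e := by simp only [Matrix.mul_assoc]
    _ = 1 := by
        rw [hU2, Matrix.mul_one, Matrix.diagonal_mul_diagonal]
        have hfun : (fun j => star e j * e j) = fun _ => (1 : ℂ) := by
          funext j
          rw [Pi.star_apply, mul_comm]
          exact heconj j
        rw [hfun, Matrix.diagonal_one]
  · rw [Matrix.transpose_mul, Matrix.diagonal_transpose, hUT]
    calc q = U * diagonal d * Uᴴ := hqUDU
    _ = U * diagonal e * (diagonal e * Uᴴ) := by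
        rw [show U * diagonal e * (diagonal e * Uᴴ) = U * (diagonal e * diagonal e) * Uᴴ by
          simp only [Matrix.mul_assoc], Matrix.diagonal_mul_diagonal,
          show (fun i => e i * e i) = d from funext he2]
end

section
/- Let Q be an n×n unitary complex matrix, set q = Q·Qᵀ, H = fromBlocks(0, q, q†, 0), and T = fromBlocks(0, 1ₙ, 1ₙ, 0). Define the 2n×n matrix Φ whose top n×n block is (1/√2)·i·Q and whose bottom n×n block is −(1/√2)·i·conj(Q). Then Φ†·Φ = 1ₙ, H·Φ = −Φ, and T·conj(Φ) = Φ. -/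
open Matrix

/-- Vertical stacking of two `n×n` matrices into a `2n×n` matrix. -/
def stack {n : ℕ} (A B : Matrix (Fin n) (Fin n) ℂ) :
    Matrix (Fin n ⊕ Fin n) (Fin n) ℂ :=
  Matrix.of (Sum.elim A B)

lemma mconj_mul' {n : ℕ} (A B : Matrix (Fin n) (Fin n) ℂ) :
    mconj (A * B) = mconj A * mconj B := by
  ext i j; simp [mconj, mul_apply, map_sum]

lemma mconj_conjTranspose' {m k : Type*} (A : Matrix m k ℂ) :
    mconj Aᴴ = Aᵀ := by
  ext i j; simp [mconj, conjTranspose_apply]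

lemma mconj_stack' {n : ℕ} (A B : Matrix (Fin n) (Fin n) ℂ) :
    mconj (stack A B) = stack (mconj A) (mconj B) := by
  ext i j; cases i <;> simp [mconj, stack, Sum.elim]

lemma mconj_smul' {m k : Type*} (c : ℂ) (A : Matrix m k ℂ) :
    mconj (c • A) = (starRingEnd ℂ c) • mconj A := by
  ext i j; simp [mconj]

lemma smul_stack' {n : ℕ} (c : ℂ) (A B : Matrix (Fin n) (Fin n) ℂ) :
    c • stack A B = stack (c • A) (c • B) := by
  ext i j; cases i <;> simp [stack, Sum.elim]

lemma mconj_neg' {m k : Type*} (A : Matrix m k ℂ) : mconj (-A) = -mconj A := by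
  ext i j; simp [mconj]

lemma mconj_mconj' {m k : Type*} (A : Matrix m k ℂ) : mconj (mconj A) = A := by
  ext i j; simp [mconj]

lemma neg_stack' {n : ℕ} (A B : Matrix (Fin n) (Fin n) ℂ) :
    -(stack A B) = stack (-A) (-B) := by
  ext i j; cases i <;> simp [stack, Sum.elim]

lemma fromBlocks_mul_stack' {n : ℕ} (A B C D X Y : Matrix (Fin n) (Fin n) ℂ) :
    fromBlocks A B C D * stack X Y = stack (A * X + B * Y) (C * X + D * Y) := by
  ext i j
  cases i <;>
    simp [stack, mul_apply, Fintype.sum_sum_type, Finset.sum_add_distrib, Sum.elim]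

lemma stack_hmul_stack' {n : ℕ} (A B X Y : Matrix (Fin n) (Fin n) ℂ) :
    (stack A B)ᴴ * stack X Y = Aᴴ * X + Bᴴ * Y := by
  ext i j
  simp [stack, mul_apply, Fintype.sum_sum_type, Finset.sum_add_distrib,
    conjTranspose_apply, Sum.elim]

/-- For `q = Q·Qᵀ` with `Q` unitary, `H = fromBlocks 0 q q† 0`, `T = fromBlocks 0 1 1 0`,
the frame `Φ` with blocks `(1/√2)·i·Q` and `−(1/√2)·i·conj(Q)` is an orthonormal occupied
frame satisfying the reality gauge condition: `Φ†·Φ = 1`, `H·Φ = −Φ`, `T·conj(Φ) = Φ`. -/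
theorem takagi_frame_is_real_occupied_frame {n : ℕ}
    (Q : Matrix (Fin n) (Fin n) ℂ)
    (hQ : Q * Qᴴ = 1) (hQ' : Qᴴ * Q = 1)
    (q : Matrix (Fin n) (Fin n) ℂ) (hq : q = Q * Qᵀ)
    (H T : Matrix (Fin n ⊕ Fin n) (Fin n ⊕ Fin n) ℂ)
    (hH : H = fromBlocks 0 q qᴴ 0)
    (hT : T = fromBlocks 0 (1 : Matrix (Fin n) (Fin n) ℂ) 1 0)
    (Φ : Matrix (Fin n ⊕ Fin n) (Fin n) ℂ)
    (hΦ : Φ = ((Real.sqrt 2 : ℂ))⁻¹ • stack (Complex.I • Q) (-(Complex.I • mconj Q))) :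
    Φᴴ * Φ = 1 ∧ H * Φ = -Φ ∧ T * mconj Φ = Φ := by
  subst hΦ hH hT hq
  set c : ℂ := ((Real.sqrt 2 : ℂ))⁻¹ with hc
  have hQt : Qᵀ * mconj Q = 1 := by
    have h := congrArg mconj hQ'
    rw [mconj_mul', mconj_conjTranspose'] at h
    simpa [mconj] using h
  have hQth : (Qᵀ)ᴴ = mconj Q := by
    ext i j; simp [mconj, conjTranspose_apply]
  have hmQh : (mconj Q)ᴴ = Qᵀ := by
    ext i j; simp [mconj, conjTranspose_apply]
  have hcs : (starRingEnd ℂ) c = c := by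
    simp [hc, map_inv₀, Complex.conj_ofReal]
  have hcc : star c * c = 2⁻¹ := by
    rw [show (star c : ℂ) = (starRingEnd ℂ) c from rfl, hcs, hc, ← mul_inv, ← Complex.ofReal_mul,
      Real.mul_self_sqrt (by norm_num : (2:ℝ) ≥ 0).le]
    norm_num
  refine ⟨?_, ?_, ?_⟩
  · rw [conjTranspose_smul, Matrix.smul_mul, Matrix.mul_smul, smul_smul,
      stack_hmul_stack']
    have h1 : (Complex.I • Q)ᴴ * (Complex.I • Q) = 1 := by
      rw [conjTranspose_smul, Matrix.smul_mul, Matrix.mul_smul, smul_smul, hQ']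
      simp [Complex.conj_I]
    have h3 : (-(Complex.I • mconj Q))ᴴ * (-(Complex.I • mconj Q)) = 1 := by
      rw [conjTranspose_neg, Matrix.neg_mul, Matrix.mul_neg, neg_neg,
        conjTranspose_smul, Matrix.smul_mul, Matrix.mul_smul, smul_smul,
        hmQh, hQt]
      simp [Complex.conj_I]
    rw [h1, h3, hcc, ← two_smul ℂ (1 : Matrix (Fin n) (Fin n) ℂ), smul_smul]
    norm_num
  · rw [Matrix.mul_smul, fromBlocks_mul_stack']
    have hb1 : (0 : Matrix (Fin n) (Fin n) ℂ) * (Complex.I • Q) +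
        (Q * Qᵀ) * (-(Complex.I • mconj Q)) = -(Complex.I • Q) := by
      rw [Matrix.zero_mul, zero_add, Matrix.mul_neg, Matrix.mul_smul,
        Matrix.mul_assoc, hQt, Matrix.mul_one]
    have hb2 : (Q * Qᵀ)ᴴ * (Complex.I • Q) +
        (0 : Matrix (Fin n) (Fin n) ℂ) * (-(Complex.I • mconj Q)) =
        -(-(Complex.I • mconj Q)) := by
      rw [Matrix.zero_mul, add_zero, conjTranspose_mul, hQth, Matrix.mul_smul,
        Matrix.mul_assoc, hQ', Matrix.mul_one, neg_neg]
    rw [hb1, hb2, ← neg_stack', smul_neg]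
  · rw [mconj_smul', hcs, mconj_stack', mconj_smul', mconj_neg', mconj_smul',
      mconj_mconj', Matrix.mul_smul, fromBlocks_mul_stack', Matrix.one_mul,
      Matrix.one_mul, Matrix.zero_mul, Matrix.zero_mul, zero_add, add_zero]
    simp [Complex.conj_I]
end

section
/- Let Q : ℝ → (n×n complex matrices) be differentiable with Q(t) unitary for every t, and define the 2n×n matrix Φ(t) with top block (1/√2)·i·Q(t) and bottom block −(1/√2)·i·conj(Q(t)). Then for every t, the Berry connection A(t) := Φ(t)†·Φ′(t) equals (1/2)·(Q(t)†·Q′(t) + conj(Q(t)†·Q′(t))), and A(t) is a real antisymmetric matrix: conj(A(t)) = A(t) and A(t)ᵀ = −A(t). -/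
open Matrix

lemma stack_mul_conjT {n : ℕ} (A B C D : Matrix (Fin n) (Fin n) ℂ) :
    (stack A B)ᴴ * stack C D = Aᴴ * C + Bᴴ * D := by
  ext i j
  simp [stack, Matrix.mul_apply, Matrix.conjTranspose_apply, Fintype.sum_sum_type,
    Matrix.add_apply]
  rfl

lemma mconj_apply {m n : Type*} (M : Matrix m n ℂ) (i : m) (j : n) :
    mconj M i j = starRingEnd ℂ (M i j) := rfl

/-- For a differentiable family of unitaries `Q(t)` and the real frame
`Φ(t) = (1/√2)·(i·Q(t) ; −i·conj(Q(t)))`, the Berry connection `A(t) = Φ(t)†·Φ′(t)` equals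
`(1/2)(Q†Q′ + conj(Q†Q′))` and is a real antisymmetric matrix. -/
theorem real_berry_connection_of_takagi_frame {n : ℕ}
    (Q Q' : ℝ → Matrix (Fin n) (Fin n) ℂ)
    (hQderiv : ∀ t i j, HasDerivAt (fun s => Q s i j) (Q' t i j) t)
    (hQunit : ∀ t, Q t * (Q t)ᴴ = 1 ∧ (Q t)ᴴ * Q t = 1)
    (Φ Φ' : ℝ → Matrix (Fin n ⊕ Fin n) (Fin n) ℂ)
    (hΦ : ∀ t, Φ t =
      ((Real.sqrt 2 : ℂ))⁻¹ • stack (Complex.I • Q t) (-(Complex.I • mconj (Q t))))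
    (hΦderiv : ∀ t i j, HasDerivAt (fun s => Φ s i j) (Φ' t i j) t) :
    ∀ t,
      (Φ t)ᴴ * Φ' t =
        (1 / 2 : ℂ) • ((Q t)ᴴ * Q' t + mconj ((Q t)ᴴ * Q' t)) ∧
      mconj ((Φ t)ᴴ * Φ' t) = (Φ t)ᴴ * Φ' t ∧
      ((Φ t)ᴴ * Φ' t)ᵀ = -((Φ t)ᴴ * Φ' t) := by
  intro t
  set c : ℂ := ((Real.sqrt 2 : ℂ))⁻¹ with hc
  -- identify Φ'
  have hΦ' : Φ' t = c • stack (Complex.I • Q' t) (-(Complex.I • mconj (Q' t))) := by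
    ext i j
    have hder : HasDerivAt (fun s => Φ s i j)
        ((c • stack (Complex.I • Q' t) (-(Complex.I • mconj (Q' t)))) i j) t := by
      have heq : (fun s => Φ s i j) =
          fun s => (c • stack (Complex.I • Q s) (-(Complex.I • mconj (Q s)))) i j := by
        funext s; rw [hΦ s]
      rw [heq]
      cases i with
      | inl i =>
        simp only [stack, Matrix.smul_apply, Matrix.of_apply, Sum.elim_inl, smul_eq_mul]
        exact (((hQderiv t i j).const_mul Complex.I).const_mul c)
      | inr i =>
        simp only [stack, Matrix.smul_apply, Matrix.of_apply, Sum.elim_inr,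
          Matrix.neg_apply, Matrix.smul_apply, mconj_apply, smul_eq_mul, mul_neg]
        have : HasDerivAt (fun s => starRingEnd ℂ (Q s i j)) (starRingEnd ℂ (Q' t i j)) t :=
          (hQderiv t i j).star
        change HasDerivAt (fun s => c * -(Complex.I * starRingEnd ℂ (Q s i j)))
          (c * -(Complex.I * starRingEnd ℂ (Q' t i j))) t
        simp only [mul_neg]
        exact ((this.const_mul Complex.I).const_mul c).neg
    exact HasDerivAt.unique (hΦderiv t i j) hder
  have hcc : star c = c := by
    rw [hc, ← Complex.ofReal_inv, Complex.star_def, Complex.conj_ofReal]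
  have hc2 : c * c = 1 / 2 := by
    have h2 : (Real.sqrt 2 : ℂ) * (Real.sqrt 2 : ℂ) = 2 := by
      rw [← Complex.ofReal_mul, Real.mul_self_sqrt (by norm_num)]
      norm_num
    rw [hc, ← mul_inv]
    rw [h2]
    norm_num
  -- the main algebraic identity
  have hA : (Φ t)ᴴ * Φ' t =
      (1 / 2 : ℂ) • ((Q t)ᴴ * Q' t + mconj ((Q t)ᴴ * Q' t)) := by
    rw [hΦ t, hΦ']
    rw [Matrix.conjTranspose_smul, Matrix.smul_mul, Matrix.mul_smul, smul_smul]
    rw [hcc, hc2]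
    rw [stack_mul_conjT]
    congr 1
    have h1 : (Complex.I • Q t)ᴴ * (Complex.I • Q' t) = (Q t)ᴴ * Q' t := by
      rw [Matrix.conjTranspose_smul, Matrix.smul_mul, Matrix.mul_smul, smul_smul]
      simp [Complex.conj_I]
    have h2 : (-(Complex.I • mconj (Q t)))ᴴ * (-(Complex.I • mconj (Q' t)))
        = mconj ((Q t)ᴴ * Q' t) := by
      rw [Matrix.conjTranspose_neg, Matrix.neg_mul, Matrix.mul_neg, neg_neg]
      rw [Matrix.conjTranspose_smul, Matrix.smul_mul, Matrix.mul_smul, smul_smul]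
      rw [show star Complex.I * Complex.I = 1 by
        simp [Complex.star_def, Complex.conj_I], one_smul]
      ext i j
      simp [mconj, Matrix.mul_apply, Matrix.conjTranspose_apply, map_sum]
    rw [h1, h2]
  refine ⟨hA, ?_, ?_⟩
  · -- real
    rw [hA]
    ext i j
    simp only [mconj, Matrix.map_apply, Matrix.smul_apply, Matrix.add_apply, smul_eq_mul,
      _root_.map_mul, map_add, Complex.conj_conj]
    rw [show (starRingEnd ℂ) (1/2 : ℂ) = 1/2 by rw [map_div₀, _root_.map_one, map_ofNat]]
    ring
  · -- antisymmetric
    -- derivative of unitarity: Q'ᴴ Q + Qᴴ Q' = 0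
    have hanti : (Q' t)ᴴ * Q t + (Q t)ᴴ * Q' t = 0 := by
      ext i j
      have hconst : ∀ s, ((Q s)ᴴ * Q s) i j = (1 : Matrix (Fin n) (Fin n) ℂ) i j := by
        intro s; rw [(hQunit s).2]
      have hder0 : HasDerivAt (fun s => ((Q s)ᴴ * Q s) i j) 0 t := by
        have : (fun s => ((Q s)ᴴ * Q s) i j) = fun _ => (1 : Matrix (Fin n) (Fin n) ℂ) i j := by
          funext s; exact hconst s
        rw [this]; exact hasDerivAt_const _ _
      have hder : HasDerivAt (fun s => ((Q s)ᴴ * Q s) i j)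
          (((Q' t)ᴴ * Q t + (Q t)ᴴ * Q' t) i j) t := by
        simp only [Matrix.mul_apply, Matrix.conjTranspose_apply, Matrix.add_apply,
          ← Finset.sum_add_distrib]
        apply HasDerivAt.fun_sum
        intro k _
        exact ((hQderiv t k i).star.mul (hQderiv t k j)).congr_deriv (by ring)
      have := HasDerivAt.unique hder hder0
      simpa [Matrix.zero_apply] using this
    have hX : ((Q t)ᴴ * Q' t)ᴴ = -((Q t)ᴴ * Q' t) := by
      have : ((Q t)ᴴ * Q' t)ᴴ = (Q' t)ᴴ * Q t := by
        rw [Matrix.conjTranspose_mul, Matrix.conjTranspose_conjTranspose]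
      rw [this]
      linear_combination (norm := module) hanti
    rw [hA]
    ext i j
    have h1 := congrFun (congrFun hX j) i
    have h2 := congrFun (congrFun hX i) j
    simp only [Matrix.conjTranspose_apply, Matrix.neg_apply] at h1 h2
    simp only [Matrix.transpose_apply, Matrix.smul_apply, Matrix.add_apply, Matrix.neg_apply,
      mconj, Matrix.map_apply, smul_eq_mul, starRingEnd_apply]
    rw [h1, h2]
    ring
end

section
/- Kramers degeneracy from a quaternionic structure: let A be an N×N complex Hermitian matrix and J an N×N unitary matrix satisfying J·conj(J) = −1 and J·conj(A)·J† = A. Then for every real number λ, the complex dimension of the eigenspace {u ∈ ℂᴺ : A·u = λ·u} is even. -/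
open Matrix

lemma mconj_mulVec_star {N : ℕ} (M : Matrix (Fin N) (Fin N) ℂ) (v : Fin N → ℂ) :
    mconj M *ᵥ star v = star (M *ᵥ v) := by
  funext i
  simp [mconj, Matrix.mulVec, dotProduct, Pi.star_apply, star_sum, map_sum, mul_comm]

lemma transpose_conjTranspose_eq {m n : Type*} (M : Matrix m n ℂ) :
    (Mᴴ)ᵀ = mconj M := by
  ext i j
  simp [Matrix.conjTranspose_apply, mconj]

open ComplexOrder in
lemma star_dot_self_eq_zero {n : ℕ} {v : Fin n → ℂ} (h : star v ⬝ᵥ v = 0) : v = 0 :=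
  dotProduct_star_self_eq_zero.1 h

/-- Kramers degeneracy: if a Hermitian matrix `A` commutes with the antiunitary map
`u ↦ J·conj(u)` squaring to `−1` (i.e. `J` unitary, `J·conj(J) = −1`,
`J·conj(A)·J† = A`), then every eigenspace of `A` has even complex dimension. -/
theorem kramers_degeneracy {N : ℕ}
    (A J : Matrix (Fin N) (Fin N) ℂ)
    (hA : Aᴴ = A)
    (hJ : J * Jᴴ = 1) (hJ' : Jᴴ * J = 1)
    (hJsq : J * mconj J = -1)
    (hJA : J * mconj A * Jᴴ = A) :
    ∀ lam : ℝ,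
      Even (Module.finrank ℂ
        (Module.End.eigenspace (Matrix.toLin' A) (lam : ℂ))) := by
  intro lam
  set V := Module.End.eigenspace (Matrix.toLin' A) (lam : ℂ) with hV
  -- basic matrix identities
  have hconjJ : mconj J = -Jᴴ := by
    have := congrArg (fun M => Jᴴ * M) hJsq
    simpa [← mul_assoc, hJ', neg_eq_iff_eq_neg] using this
  have hAJ : A * J = J * mconj A := by
    have := congrArg (fun M => M * J) hJA
    simpa [mul_assoc, hJ'] using this.symm
  have hskew : (Jᴴ)ᵀ = -Jᴴ := by
    rw [transpose_conjTranspose_eq, hconjJ]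
  have hJtJH : Jᵀ * Jᴴ = -1 := by
    have h1 : mconj J * J = -1 := by rw [hconjJ]; simpa using hJ'
    have := congrArg Matrix.transpose h1
    rw [Matrix.transpose_mul] at this
    rw [← transpose_conjTranspose_eq] at this
    simpa [hskew, Matrix.transpose_neg] using this
  -- the antiunitary map preserves the eigenspace
  have hmem : ∀ u : Fin N → ℂ, u ∈ V → (J *ᵥ star u) ∈ V := by
    intro u hu
    rw [hV, Module.End.mem_eigenspace_iff] at hu ⊢
    rw [Matrix.toLin'_apply] at hu ⊢
    have h2 : A *ᵥ (J *ᵥ star u) = (A * J) *ᵥ star u := by rw [Matrix.mulVec_mulVec]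
    rw [h2, hAJ, ← Matrix.mulVec_mulVec, mconj_mulVec_star, hu]
    have hstar : star ((lam : ℂ) • u) = (lam : ℂ) • star u := by
      funext i; simp [Pi.smul_apply, star_mul', Complex.conj_ofReal]
    rw [hstar, Matrix.mulVec_smul]
  -- the bilinear form
  set B : LinearMap.BilinForm ℂ (Fin N → ℂ) := Matrix.toBilin' Jᴴ with hB
  have hBapp : ∀ u v, B u v = u ⬝ᵥ (Jᴴ *ᵥ v) := fun u v => Matrix.toBilin'_apply' _ _ _
  have hBskew : ∀ u v, B v u = -B u v := by
    intro u v
    rw [hBapp, hBapp]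
    rw [Matrix.dotProduct_mulVec, ← Matrix.mulVec_transpose, hskew,
      Matrix.neg_mulVec, neg_dotProduct, dotProduct_comm]
  have hBT : ∀ w : Fin N → ℂ, B (J *ᵥ star w) w = -(star w ⬝ᵥ w) := by
    intro w
    rw [hBapp]
    rw [Matrix.dotProduct_mulVec, ← Matrix.transpose_transpose J,
      Matrix.mulVec_transpose, Matrix.vecMul_vecMul, Matrix.transpose_transpose,
      hJtJH]
    rw [Matrix.vecMul_neg, Matrix.vecMul_one, neg_dotProduct]
  -- the Gram-type matrix of B on a basis of V
  set d := Module.finrank ℂ V with hd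
  let b : Module.Basis (Fin d) ℂ V := Module.finBasis ℂ V
  clear_value b
  obtain ⟨M, hM⟩ : ∃ M : Matrix (Fin d) (Fin d) ℂ,
      ∀ k l, M k l = B (b k : Fin N → ℂ) (b l : Fin N → ℂ) :=
    ⟨_, fun _ _ => rfl⟩
  -- M is skew-symmetric
  have hMskew : Mᵀ = -M := by
    ext k l
    rw [Matrix.transpose_apply, Matrix.neg_apply, hM, hM]
    exact hBskew _ _
  -- M has nonzero determinant
  have hdet : M.det ≠ 0 := by
    intro h0
    obtain ⟨x, hx, hMx⟩ := (Matrix.exists_mulVec_eq_zero_iff).2 h0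
    set w : V := ∑ l, x l • b l with hw
    have hwc : (w : Fin N → ℂ) = ∑ l, x l • (b l : Fin N → ℂ) := by
      rw [hw]
      simp
    -- B (b k) w = 0 for all k
    have hBk : ∀ k, B (b k : Fin N → ℂ) (w : Fin N → ℂ) = 0 := by
      intro k
      rw [hwc, map_sum]
      have h3 : ∀ l, (B (b k : Fin N → ℂ)) (x l • (b l : Fin N → ℂ)) = x l * M k l := by
        intro l
        rw [_root_.map_smul, smul_eq_mul, hM]
      rw [Finset.sum_congr rfl (fun l _ => h3 l)]
      have h4 := congrFun hMx k
      rw [show (0 : Fin d → ℂ) k = 0 from rfl] at h4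
      rw [← h4, Matrix.mulVec, dotProduct]
      exact Finset.sum_congr rfl (fun l _ => mul_comm _ _)
    -- hence B v w = 0 for all v ∈ V, by linearity in the first slot
    have hBv : ∀ v : Fin N → ℂ, v ∈ V → B v (w : Fin N → ℂ) = 0 := by
      intro v hv
      have hcomp : ((B.flip (w : Fin N → ℂ)).comp V.subtype) = 0 := by
        apply b.ext
        intro k
        simpa using hBk k
      have := congrArg (fun g => g ⟨v, hv⟩) hcomp
      simpa using this
    -- apply with v = J *ᵥ star w
    have hz : B (J *ᵥ star (w : Fin N → ℂ)) (w : Fin N → ℂ) = 0 :=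
      hBv _ (hmem _ w.2)
    rw [hBT] at hz
    have hw0 : (w : Fin N → ℂ) = 0 := by
      apply star_dot_self_eq_zero
      simpa [neg_eq_zero] using hz
    have hwV : w = 0 := Subtype.ext hw0
    have hx0 : x = 0 := by
      have hli := b.linearIndependent
      have := linearIndependent_iff'.1 hli Finset.univ x (by simpa [hw] using hwV)
      funext l; exact this l (Finset.mem_univ l)
    exact hx hx0
  -- skew + nonzero det forces even dimension
  rw [Nat.not_odd_iff_even.symm]
  intro hodd
  apply hdet
  have h1 : M.det = (-1 : ℂ) ^ d * M.det := by
    conv_lhs => rw [← Matrix.det_transpose, hMskew, Matrix.det_neg]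
    simp [Fintype.card_fin]
  rw [Odd.neg_one_pow hodd] at h1
  linear_combination (1 / 2 : ℂ) * h1
end

section
/- PC symmetry is inherited by the flattened Hamiltonian: let H be an N×N complex Hermitian invertible matrix and C an N×N unitary matrix with C·conj(H)·C† = −H. Then C·conj(sign(H))·C† = −sign(H), where sign(H) is obtained by applying the real sign function to H via the continuous functional calculus. -/
/-!
The map `X ↦ C · conj(X) · C†` is a continuous `ℝ`-linear ⋆-algebra endomorphism of the
matrix algebra (antiunitary, hence only `ℝ`-linear). Such maps commute with the continuous
functional calculus, so it sends `sign(H)` to `sign(-H)`, which is `-sign(H)` because the sign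
function is odd.
-/

open Matrix

section OddFunction

theorem ContinuousOn.image_neg_of_odd {f : ℝ → ℝ} (hf_odd : Function.Odd f) {s : Set ℝ}
    (hf : ContinuousOn f s) : ContinuousOn f ((-·) '' s) := by
  have hf_eq : f = fun y => -f (-y) := funext fun y => by rw [hf_odd, neg_neg]
  rw [hf_eq]
  refine (hf.comp continuousOn_neg ?_).neg
  rintro _ ⟨x, hx, rfl⟩
  simpa using hx

variable {A : Type*} [Ring A] [StarRing A] [TopologicalSpace A] [Algebra ℝ A]
  [ContinuousFunctionalCalculus ℝ A IsSelfAdjoint] [ContinuousMap.UniqueHom ℝ A]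

theorem cfc_neg_of_odd {f : ℝ → ℝ} (hf_odd : Function.Odd f) {a : A}
    (hf : ContinuousOn f (spectrum ℝ a)) (ha : IsSelfAdjoint a) :
    cfc f (-a) = -cfc f a :=
  calc cfc f (-a)
    _ = cfc (fun x => f (-x)) a := (cfc_comp_neg f a (hf.image_neg_of_odd hf_odd) ha).symm
    _ = cfc (fun x => -f x) a := cfc_congr fun x _ => hf_odd x
    _ = -cfc f a := cfc_neg f a

theorem StarAlgHomClass.map_cfc_eq_neg_of_odd {F : Type*} [FunLike F A A]
    [AlgHomClass F ℝ A A] [StarHomClass F A A] (φ : F) (hφ : Continuous φ) {f : ℝ → ℝ}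
    (hf_odd : Function.Odd f) {a : A} (hf : ContinuousOn f (spectrum ℝ a))
    (ha : IsSelfAdjoint a) (hφa : φ a = -a) :
    φ (cfc f a) = -cfc f a := by
  rw [StarAlgHomClass.map_cfc (S := ℝ) φ f a hf hφ ha (hφa ▸ ha.neg), hφa,
    cfc_neg_of_odd hf_odd hf ha]

end OddFunction

namespace Matrix

variable (n : Type*) [Fintype n] [DecidableEq n]

noncomputable def conjStarAlgHom : Matrix n n ℂ →⋆ₐ[ℝ] Matrix n n ℂ :=
  { Complex.conjAe.toAlgHom.mapMatrix with
    map_star' := fun M => by ext; simp }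

variable {n}

theorem continuous_conjStarAlgHom : Continuous (conjStarAlgHom n) :=
  continuous_id.matrix_map Complex.continuous_conj

noncomputable def antiunitaryConj (C : unitary (Matrix n n ℂ)) :
    Matrix n n ℂ →⋆ₐ[ℝ] Matrix n n ℂ :=
  (Unitary.conjStarAlgAut ℝ _ C).toStarAlgHom.comp (conjStarAlgHom n)

theorem antiunitaryConj_apply (C : unitary (Matrix n n ℂ)) (M : Matrix n n ℂ) :
    antiunitaryConj C M = C * mconj M * (C : Matrix n n ℂ)ᴴ := rfl

theorem continuous_antiunitaryConj (C : unitary (Matrix n n ℂ)) :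
    Continuous (antiunitaryConj C) :=
  (continuous_const.matrix_mul continuous_conjStarAlgHom).matrix_mul continuous_const

end Matrix

theorem PC_symmetry_of_flattened_hamiltonian_general {N : ℕ}
    (H C : Matrix (Fin N) (Fin N) ℂ)
    (hH : H.IsHermitian)
    (hC : C * Cᴴ = 1) (hC' : Cᴴ * C = 1)
    (hPC : C * mconj H * Cᴴ = -H) :
    C * mconj (hH.cfc Real.sign) * Cᴴ = -(hH.cfc Real.sign) := by
  let U : unitary (Matrix (Fin N) (Fin N) ℂ) := ⟨C, Unitary.mem_iff.mpr ⟨hC', hC⟩⟩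
  rw [← hH.cfc_eq]
  exact StarAlgHomClass.map_cfc_eq_neg_of_odd (antiunitaryConj U) (continuous_antiunitaryConj U)
    (fun _ => Real.sign_neg) (H.finite_real_spectrum.continuousOn _) hH hPC

/-- PC symmetry is inherited by the flattened Hamiltonian: if `H` is Hermitian and
invertible and `C` is unitary with `C·conj(H)·C† = −H`, then
`C·conj(sign(H))·C† = −sign(H)`, where `sign(H)` is the sign function of `H` via the
continuous functional calculus. -/
theorem PC_symmetry_of_flattened_hamiltonian {N : ℕ}
    (H C : Matrix (Fin N) (Fin N) ℂ)
    (hH : H.IsHermitian)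
    (hinv : IsUnit H)
    (hC : C * Cᴴ = 1) (hC' : Cᴴ * C = 1)
    (hPC : C * mconj H * Cᴴ = -H) :
    C * mconj (hH.cfc Real.sign) * Cᴴ = -(hH.cfc Real.sign) :=
  PC_symmetry_of_flattened_hamiltonian_general H C hH hC hC' hPC
end
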